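/- arXiv:quant-ph/0511175 — 3 statements merged into one kernel-verified Lean document; each statement's English description precedes it below -/
import Mathlib

section
/- Let (d_l)_{l ∈ F_2^n} be nonnegative reals with Σ_l d_l² ≤ 1, let w ∈ F_2^n, and let v̂ be a real number with v̂ ≤ |w|. Then for every α > 0, Σ_l d_l · d_{l⊕w} ≤ α + (1/α) · Σ_{|l| ≥ v̂/2} d_l². In particular, taking α = √(Σ_{|l| ≥ v̂/2} d_l²), one gets Σ_l d_l · d_{l⊕w} ≤ 2·√(Σ_{|l| ≥ v̂/2} d_l²) when that sum is positive. -/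
open Finset

/-- For nonnegative `(d_l)` with `∑ d_l² ≤ 1`, `w ∈ 𝔽₂ⁿ` and `v̂ ≤ |w|`:
for every `α > 0`, `∑_l d_l d_{l⊕w} ≤ α + (1/α) ∑_{|l| ≥ v̂/2} d_l²`;
and if `S = ∑_{|l| ≥ v̂/2} d_l²` is positive then `∑_l d_l d_{l⊕w} ≤ 2√S`. -/
theorem stmt_7 {n : ℕ} (d : (Fin n → ZMod 2) → ℝ)
    (hd : ∀ l, 0 ≤ d l) (hsum : ∑ l, (d l) ^ 2 ≤ 1)
    (w : Fin n → ZMod 2) (vhat : ℝ) (hvhat : vhat ≤ (hammingNorm w : ℝ))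
    (S : ℝ)
    (hS : S = ∑ l ∈ Finset.univ.filter (fun l => vhat / 2 ≤ (hammingNorm l : ℝ)),
            (d l) ^ 2) :
    (∀ α : ℝ, 0 < α → ∑ l, d l * d (l + w) ≤ α + (1 / α) * S) ∧
    (0 < S → ∑ l, d l * d (l + w) ≤ 2 * Real.sqrt S) := by
  -- key norm inequality
  have hnorm : ∀ l : Fin n → ZMod 2,
      (hammingNorm w : ℝ) ≤ (hammingNorm l : ℝ) + (hammingNorm (l + w) : ℝ) := by
    intro l
    have h1 : hammingNorm w = hammingDist (l + w) l := by
      rw [hammingDist_eq_hammingNorm]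
      congr 1
      funext i
      have : (l i + w i) - l i = w i := by ring
      simp only [Pi.sub_apply, Pi.add_apply, Pi.neg_apply]
      generalize l i = a
      generalize w i = b
      revert a b
      decide
    have h2 : hammingDist (l + w) l ≤ hammingDist (l + w) 0 + hammingDist 0 l :=
      hammingDist_triangle _ _ _
    rw [hammingDist_zero_right, hammingDist_zero_left] at h2
    push_cast
    rw [h1]
    exact_mod_cast le_trans h2 (by rw [Nat.add_comm])
  set A : Finset (Fin n → ZMod 2) :=
    Finset.univ.filter (fun l => vhat / 2 ≤ (hammingNorm l : ℝ)) with hA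
  have hmemA : ∀ l, l ∉ A → (l + w) ∈ A := by
    intro l hl
    simp only [hA, mem_filter, mem_univ, true_and] at hl ⊢
    push_neg at hl
    have := hnorm l
    linarith [hvhat]
  have hz : ∀ a b : ZMod 2, a + b + b = a := by decide
  have haddw : ∀ l : Fin n → ZMod 2, (l + w) + w = l := fun l =>
    funext fun i => hz (l i) (w i)
  have hinj : Function.Injective (fun l : Fin n → ZMod 2 => l + w) := by
    intro a b h
    have := congrArg (fun x => x + w) h
    simpa [haddw] using this
  have hreindex : ∑ l : Fin n → ZMod 2, d (l + w) ^ 2 = ∑ l, d l ^ 2 := by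
    apply Fintype.sum_bijective (fun l => l + w)
      (Function.Involutive.bijective haddw)
    intro l; rfl
  have hSnonneg : 0 ≤ S := by
    rw [hS]; exact Finset.sum_nonneg fun l _ => sq_nonneg _
  have key : ∀ α : ℝ, 0 < α → ∑ l, d l * d (l + w) ≤ α + (1 / α) * S := by
    intro α hα
    have pt : ∀ l : Fin n → ZMod 2, d l * d (l + w) ≤
        if l ∈ A then (α * d (l + w) ^ 2 + d l ^ 2 / α) / 2
        else (α * d l ^ 2 + d (l + w) ^ 2 / α) / 2 := by
      have key2 : ∀ x y : ℝ, x * y ≤ (α * x ^ 2 + y ^ 2 / α) / 2 := by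
        intro x y
        rw [le_div_iff₀ (by norm_num : (0:ℝ) < 2), div_eq_mul_inv]
        nlinarith [sq_nonneg (α * x - y), mul_inv_cancel₀ hα.ne',
          inv_pos.mpr hα, mul_nonneg (sq_nonneg (α * x - y)) (inv_pos.mpr hα).le]
      intro l
      split
      · have := key2 (d (l + w)) (d l)
        linarith [this, mul_comm (d l) (d (l + w))]
      · exact key2 (d l) (d (l + w))
    have hsplit : ∑ l, d l * d (l + w) ≤
        ∑ l ∈ A, (α * d (l + w) ^ 2 + d l ^ 2 / α) / 2
          + ∑ l ∈ Aᶜ, (α * d l ^ 2 + d (l + w) ^ 2 / α) / 2 := by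
      rw [← Finset.sum_add_sum_compl A]
      gcongr with l hl l hl
      · simpa [hl] using pt l
      · have : l ∉ A := by simpa using hl
        simpa [this] using pt l
    -- Bound each of the four pieces
    have b1 : ∑ l ∈ A, α * d (l + w) ^ 2 ≤ α := by
      calc ∑ l ∈ A, α * d (l + w) ^ 2 ≤ ∑ l, α * d (l + w) ^ 2 :=
            Finset.sum_le_sum_of_subset_of_nonneg (Finset.subset_univ A)
              (fun l _ _ => by positivity)
        _ = α * ∑ l, d (l + w) ^ 2 := by rw [Finset.mul_sum]
        _ = α * ∑ l, d l ^ 2 := by rw [hreindex]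
        _ ≤ α * 1 := by gcongr
        _ = α := mul_one α
    have b2 : ∑ l ∈ A, d l ^ 2 / α = S / α := by
      rw [hS, ← Finset.sum_div]
    have b3 : ∑ l ∈ Aᶜ, α * d l ^ 2 ≤ α := by
      calc ∑ l ∈ Aᶜ, α * d l ^ 2 ≤ ∑ l, α * d l ^ 2 :=
            Finset.sum_le_sum_of_subset_of_nonneg (Finset.subset_univ _)
              (fun l _ _ => by positivity)
        _ = α * ∑ l, d l ^ 2 := by rw [Finset.mul_sum]
        _ ≤ α * 1 := by gcongr
        _ = α := mul_one α
    have b4 : ∑ l ∈ Aᶜ, d (l + w) ^ 2 / α ≤ S / α := by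
      have himg : ∑ l ∈ Aᶜ, d (l + w) ^ 2 / α
          = ∑ m ∈ Aᶜ.image (fun l => l + w), d m ^ 2 / α := by
        rw [Finset.sum_image (fun a _ b _ h => hinj h)]
      rw [himg]
      have hsub : Aᶜ.image (fun l => l + w) ⊆ A := by
        intro m hm
        obtain ⟨l, hl, rfl⟩ := Finset.mem_image.mp hm
        exact hmemA l (by simpa using hl)
      calc ∑ m ∈ Aᶜ.image (fun l => l + w), d m ^ 2 / α
          ≤ ∑ m ∈ A, d m ^ 2 / α :=
            Finset.sum_le_sum_of_subset_of_nonneg hsub (fun l _ _ => by positivity)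
        _ = S / α := by rw [hS, ← Finset.sum_div]
    have e1 : ∑ l ∈ A, (α * d (l + w) ^ 2 + d l ^ 2 / α) / 2
        = (∑ l ∈ A, α * d (l + w) ^ 2 + ∑ l ∈ A, d l ^ 2 / α) / 2 := by
      rw [← Finset.sum_add_distrib, Finset.sum_div]
    have e2 : ∑ l ∈ Aᶜ, (α * d l ^ 2 + d (l + w) ^ 2 / α) / 2
        = (∑ l ∈ Aᶜ, α * d l ^ 2 + ∑ l ∈ Aᶜ, d (l + w) ^ 2 / α) / 2 := by
      rw [← Finset.sum_add_distrib, Finset.sum_div]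
    rw [e1, e2] at hsplit
    have : (1 : ℝ) / α * S = S / α := by ring
    rw [this]
    linarith
  refine ⟨key, fun hSpos => ?_⟩
  have hsq : 0 < Real.sqrt S := Real.sqrt_pos.mpr hSpos
  have := key (Real.sqrt S) hsq
  have hsqS : Real.sqrt S * Real.sqrt S = S := Real.mul_self_sqrt hSnonneg
  calc ∑ l, d l * d (l + w) ≤ Real.sqrt S + (1 / Real.sqrt S) * S := this
    _ = 2 * Real.sqrt S := by
        field_simp
        nlinarith [hsqS]
end

section
/- Let ρ_0 and ρ_1 be density operators on a finite-dimensional Hilbert space, each prepared with probability 1/2, and let a POVM {E_e} be measured, giving joint distribution P(a, e) = (1/2)·Tr(ρ_a E_e). Then the mutual information I(A; E) between the preparation bit A and the outcome E is bounded: there exists a universal bound I(A; E) ≤ (1/2)·‖ρ_0 − ρ_1‖_1, where ‖·‖_1 is the trace norm. -/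
open Finset Matrix
open scoped ComplexOrder

noncomputable section

/-- Trace norm `‖M‖₁ = Tr √(Mᴴ M)` of a complex matrix. -/
def traceNorm {d : ℕ} (M : Matrix (Fin d) (Fin d) ℂ) : ℝ :=
  (((Matrix.posSemidef_conjTranspose_mul_self M).1.eigenvectorUnitary.1 *
      diagonal (((↑) : ℝ → ℂ) ∘ (Real.sqrt ∘ (Matrix.posSemidef_conjTranspose_mul_self M).1.eigenvalues)) *
      (star (Matrix.posSemidef_conjTranspose_mul_self M).1.eigenvectorUnitary :
        Matrix (Fin d) (Fin d) ℂ)).trace).re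

/-- Shannon mutual information (base 2) of a joint distribution on `α × β`. -/
def distMutInfo {α β : Type*} [Fintype α] [Fintype β] (P : α → β → ℝ) : ℝ :=
  (-∑ a, (∑ e, P a e) * Real.logb 2 (∑ e, P a e)) +
  (-∑ e, (∑ a, P a e) * Real.logb 2 (∑ a, P a e)) -
  (-∑ a, ∑ e, P a e * Real.logb 2 (P a e))

/-- Pointwise key inequality in natural log, assuming `q ≤ p`. -/
lemma key_log {p q : ℝ} (hq : 0 ≤ q) (hpq : q ≤ p) :
    p * Real.log p + q * Real.log q - (p+q) * Real.log ((p+q)/2) ≤ (p - q) * Real.log 2 := by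
  have hp : 0 ≤ p := hq.trans hpq
  rcases eq_or_lt_of_le hq with hq0 | hq0
  · rcases eq_or_lt_of_le hp with hp0 | hp0
    · simp [← hp0, ← hq0]
    · rw [← hq0]
      have h : Real.log ((p + 0)/2) = Real.log p - Real.log 2 := by
        rw [add_zero, Real.log_div (ne_of_gt hp0) (by norm_num)]
      rw [h]; simp; ring_nf; simp
  · have hp0 : 0 < p := lt_of_lt_of_le hq0 hpq
    have hs : 0 < p + q := by linarith
    have hlogdiv : Real.log ((p+q)/2) = Real.log (p+q) - Real.log 2 := by
      rw [Real.log_div (ne_of_gt hs) (by norm_num)]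
    have h1 : p * (Real.log p - Real.log (p+q)) ≤ q * (Real.log p - Real.log (p+q)) := by
      have hle : Real.log p ≤ Real.log (p+q) := Real.log_le_log hp0 (by linarith)
      exact mul_le_mul_of_nonpos_right hpq (by linarith)
    have h2 : Real.log p + Real.log q - 2 * Real.log (p+q) ≤ -(2 * Real.log 2) := by
      have hpq4 : p * q ≤ (p+q)^2 / 4 := by nlinarith [sq_nonneg (p - q)]
      have hl : Real.log (p*q) ≤ Real.log ((p+q)^2/4) :=
        Real.log_le_log (by positivity) hpq4
      rw [Real.log_mul (ne_of_gt hp0) (ne_of_gt hq0)] at hl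
      rw [Real.log_div (by positivity) (by norm_num), Real.log_pow] at hl
      have h4 : Real.log 4 = 2 * Real.log 2 := by
        rw [show (4:ℝ) = 2^2 by norm_num, Real.log_pow]; push_cast; ring
      rw [h4] at hl
      push_cast at hl
      linarith
    have h3 : q * (Real.log p + Real.log q - 2 * Real.log (p+q)) ≤ q * (-(2 * Real.log 2)) :=
      mul_le_mul_of_nonneg_left h2 hq
    rw [hlogdiv]
    nlinarith [h1, h3]

/-- Pointwise key inequality in base-2 log. -/
lemma key_logb {p q : ℝ} (hp : 0 ≤ p) (hq : 0 ≤ q) :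
    p * Real.logb 2 p + q * Real.logb 2 q - (p+q) * Real.logb 2 ((p+q)/2) ≤ |p - q| := by
  have hl2 : (0:ℝ) < Real.log 2 := Real.log_pos (by norm_num)
  have main : ∀ x y : ℝ, 0 ≤ y → y ≤ x →
      x * Real.logb 2 x + y * Real.logb 2 y - (x+y) * Real.logb 2 ((x+y)/2) ≤ x - y := by
    intro x y hy hxy
    have hkey := key_log hy hxy
    rw [Real.logb, Real.logb, Real.logb]
    calc (x * (Real.log x / Real.log 2) + y * (Real.log y / Real.log 2) -
          (x + y) * (Real.log ((x+y)/2) / Real.log 2))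
        = (x * Real.log x + y * Real.log y - (x+y) * Real.log ((x+y)/2)) / Real.log 2 := by ring
      _ ≤ ((x - y) * Real.log 2) / Real.log 2 := by gcongr
      _ = x - y := by field_simp
  rcases le_total q p with h | h
  · rw [abs_of_nonneg (by linarith)]; exact main p q hq h
  · rw [abs_of_nonpos (by linarith)]
    have hm := main q p hp h
    calc p * Real.logb 2 p + q * Real.logb 2 q - (p+q) * Real.logb 2 ((p+q)/2)
        = q * Real.logb 2 q + p * Real.logb 2 p - (q+p) * Real.logb 2 ((q+p)/2) := by ring_nf
      _ ≤ q - p := hm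
      _ = -(p - q) := by ring

lemma half_logb (x : ℝ) : x/2 * Real.logb 2 (x/2) = x/2 * Real.logb 2 x - x/2 := by
  rcases eq_or_ne x 0 with h | h
  · simp [h]
  · have : Real.logb 2 (x/2) = Real.logb 2 x - 1 := by
      rw [Real.logb_div h (by norm_num), Real.logb_self_eq_one] <;> norm_num
    rw [this]; ring

lemma trace_re_nonneg' {d : ℕ} {M : Matrix (Fin d) (Fin d) ℂ} (hM : M.PosSemidef) :
    0 ≤ M.trace.re := by
  have h : ∀ i, 0 ≤ (M i i).re := by
    intro i
    have := hM.re_dotProduct_nonneg (Pi.single i 1)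
    simpa [dotProduct, mulVec, Pi.single_apply, Finset.sum_ite_eq, RCLike.re] using this
  rw [Matrix.trace, Complex.re_sum]
  exact Finset.sum_nonneg fun i _ => h i

open scoped MatrixOrder in
lemma trace_mul_re_nonneg {d : ℕ} {A B : Matrix (Fin d) (Fin d) ℂ} (hA : A.PosSemidef)
    (hB : B.PosSemidef) : 0 ≤ (A * B).trace.re := by
  have h1 : A * B = CFC.sqrt A * (CFC.sqrt A * B) := by
    rw [← mul_assoc, CFC.sqrt_mul_sqrt_self A hA.nonneg]
  rw [h1, Matrix.trace_mul_comm]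
  have h2 : CFC.sqrt A * B * CFC.sqrt A = CFC.sqrt A * B * (CFC.sqrt A)ᴴ := by
    rw [(CFC.sqrt_nonneg A).posSemidef.isHermitian.eq]
  rw [mul_assoc, ← mul_assoc, h2]
  exact trace_re_nonneg' (hB.mul_mul_conjTranspose_same (CFC.sqrt A))

open scoped MatrixOrder in
/-- A measurement cannot increase the trace distance. -/
lemma tracenorm_bound {d K : ℕ} {Δ : Matrix (Fin d) (Fin d) ℂ} (hΔ : Δ.IsHermitian)
    (E : Fin K → Matrix (Fin d) (Fin d) ℂ) (hE : ∀ e, (E e).PosSemidef)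
    (hEsum : ∑ e, E e = 1) :
    ∑ e, |((Δ * E e).trace).re| ≤ traceNorm Δ := by
  classical
  set U : Matrix (Fin d) (Fin d) ℂ := (hΔ.eigenvectorUnitary : Matrix (Fin d) (Fin d) ℂ) with hUdef
  have hU : star U * U = 1 := Unitary.coe_star_mul_self hΔ.eigenvectorUnitary
  set lam := hΔ.eigenvalues with hlamdef
  set Dg : (Fin d → ℝ) → Matrix (Fin d) (Fin d) ℂ :=
    fun f => U * diagonal (Complex.ofReal ∘ f) * star U with hDgdef
  have hmul : ∀ f g, Dg f * Dg g = Dg (fun i => f i * g i) := by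
    intro f g
    simp only [hDgdef, Matrix.mul_assoc]
    rw [← Matrix.mul_assoc (star U) U, hU, one_mul,
      ← Matrix.mul_assoc (diagonal (Complex.ofReal ∘ f)), diagonal_mul_diagonal]
    have heq : (fun i => (Complex.ofReal ∘ f) i * (Complex.ofReal ∘ g) i)
        = Complex.ofReal ∘ (fun i => f i * g i) := by funext i; simp
    rw [heq]
  have hadd : ∀ f g, Dg f + Dg g = Dg (fun i => f i + g i) := by
    intro f g
    simp only [hDgdef]
    rw [← add_mul, ← mul_add, diagonal_add]
    have heq : (fun i => (Complex.ofReal ∘ f) i + (Complex.ofReal ∘ g) i)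
        = Complex.ofReal ∘ (fun i => f i + g i) := by funext i; simp
    rw [heq]
  have hsub : ∀ f g, Dg f - Dg g = Dg (fun i => f i - g i) := by
    intro f g
    simp only [hDgdef]
    rw [← sub_mul, ← mul_sub, diagonal_sub]
    have heq : (fun i => (Complex.ofReal ∘ f) i - (Complex.ofReal ∘ g) i)
        = Complex.ofReal ∘ (fun i => f i - g i) := by funext i; simp
    rw [heq]
  have hpsd : ∀ f : Fin d → ℝ, (∀ i, 0 ≤ f i) → (Dg f).PosSemidef := by
    intro f hf
    have h0 : (diagonal (Complex.ofReal ∘ f)).PosSemidef := by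
      apply Matrix.PosSemidef.diagonal
      intro i
      simpa using Complex.zero_le_real.mpr (hf i)
    have h2 := h0.mul_mul_conjTranspose_same U
    simpa [hDgdef, Matrix.star_eq_conjTranspose] using h2
  have hΔeq : Δ = Dg lam := by
    have h := hΔ.spectral_theorem
    rw [Unitary.conjStarAlgAut_apply] at h
    exact h
  set Pp := Dg (fun i => max (lam i) 0) with hPp
  set Nn := Dg (fun i => max (-lam i) 0) with hNn
  set S := Dg (fun i => |lam i|) with hS
  have hPNsub : Pp - Nn = Δ := by
    rw [hPp, hNn, hsub, hΔeq]
    have h : (fun i => max (lam i) 0 - max (-lam i) 0) = lam := by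
      funext i
      rcases le_total (lam i) 0 with h | h
      · simp [max_eq_right h, max_eq_left (by linarith : (0:ℝ) ≤ -lam i)]
      · simp [max_eq_left h, max_eq_right (by linarith : -lam i ≤ (0:ℝ))]
    rw [h]
  have hPNadd : Pp + Nn = S := by
    rw [hPp, hNn, hS, hadd]
    have h : (fun i => max (lam i) 0 + max (-lam i) 0) = fun i => |lam i| := by
      funext i
      rcases le_total (lam i) 0 with h | h
      · simp [max_eq_right h, max_eq_left (by linarith : (0:ℝ) ≤ -lam i), abs_of_nonpos h]
      · simp [max_eq_left h, max_eq_right (by linarith : -lam i ≤ (0:ℝ)), abs_of_nonneg h]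
    rw [h]
  have hSpsd : S.PosSemidef := hpsd _ fun i => abs_nonneg _
  have hPpsd : Pp.PosSemidef := hpsd _ fun i => le_max_right _ _
  have hNpsd : Nn.PosSemidef := hpsd _ fun i => le_max_right _ _
  have hS2 : S ^ 2 = Δᴴ * Δ := by
    rw [hΔ.eq, pow_two, hS, hmul, hΔeq, hmul]
    have h : (fun i => |lam i| * |lam i|) = fun i => lam i * lam i := by
      funext i; exact abs_mul_abs_self _
    rw [h]
  have hsqrtS : ((Matrix.posSemidef_conjTranspose_mul_self Δ).1.eigenvectorUnitary.1 *
      diagonal (((↑) : ℝ → ℂ) ∘ (Real.sqrt ∘ (Matrix.posSemidef_conjTranspose_mul_self Δ).1.eigenvalues)) *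
      (star (Matrix.posSemidef_conjTranspose_mul_self Δ).1.eigenvectorUnitary :
        Matrix (Fin d) (Fin d) ℂ)) = S := by
    have key : CFC.sqrt (Δᴴ * Δ) = S := by
      rw [← hS2, CFC.sqrt_sq S hSpsd.nonneg]
    rw [CFC.sqrt_eq_real_sqrt _ (Matrix.posSemidef_conjTranspose_mul_self Δ).nonneg, cfcₙ_eq_cfc (hf := Real.continuous_sqrt.continuousOn) (hf0 := Real.sqrt_zero),
      (Matrix.posSemidef_conjTranspose_mul_self Δ).1.cfc_eq, IsHermitian.cfc,
      Unitary.conjStarAlgAut_apply] at key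
    exact key
  have htn : traceNorm Δ = (S.trace).re := by rw [traceNorm, hsqrtS]
  have hsum : ∑ e, ((S * E e).trace).re = (S.trace).re := by
    rw [← Complex.re_sum, ← Matrix.trace_sum, ← Finset.mul_sum, hEsum, mul_one]
  rw [htn, ← hsum]
  apply Finset.sum_le_sum
  intro e _
  have hsplit : (Δ * E e).trace.re = (Pp * E e).trace.re - (Nn * E e).trace.re := by
    rw [← hPNsub, sub_mul, Matrix.trace_sub, Complex.sub_re]
  have hsplit2 : (S * E e).trace.re = (Pp * E e).trace.re + (Nn * E e).trace.re := by
    rw [← hPNadd, add_mul, Matrix.trace_add, Complex.add_re]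
  have h1 := trace_mul_re_nonneg hPpsd (hE e)
  have h2 := trace_mul_re_nonneg hNpsd (hE e)
  rw [hsplit, hsplit2, abs_sub_le_iff]
  constructor <;> linarith

/-- Distinguishing two equiprobable density matrices `ρ₀, ρ₁` with a POVM
`{E_e}` gives joint distribution `P(a,e) = Tr(ρ_a E_e)/2`; the mutual
information between the preparation bit and the outcome is bounded by half the
trace norm of `ρ₀ − ρ₁`. -/
theorem stmt_13 {d K : ℕ} (ρ : Fin 2 → Matrix (Fin d) (Fin d) ℂ)
    (hρ : ∀ a, (ρ a).PosSemidef) (hρtr : ∀ a, (ρ a).trace = 1)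
    (E : Fin K → Matrix (Fin d) (Fin d) ℂ)
    (hE : ∀ e, (E e).PosSemidef) (hEsum : ∑ e, E e = 1) :
    distMutInfo (fun (a : Fin 2) (e : Fin K) => ((ρ a * E e).trace).re / 2) ≤
      (1 / 2) * traceNorm (ρ 0 - ρ 1) := by
  classical
  set p : Fin 2 → Fin K → ℝ := fun a e => ((ρ a * E e).trace).re with hpdef
  have hpnn : ∀ a e, 0 ≤ p a e := fun a e => trace_mul_re_nonneg (hρ a) (hE e)
  have hpsum : ∀ a, ∑ e, p a e = 1 := by
    intro a
    have h : ∑ e, (ρ a * E e).trace = 1 := by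
      rw [← Matrix.trace_sum, ← Finset.mul_sum, hEsum, mul_one, hρtr a]
    rw [hpdef]
    simp only
    rw [← Complex.re_sum, h, Complex.one_re]
  have hhalf : ∀ a, ∑ e, p a e / 2 = 1/2 := by
    intro a; rw [← Finset.sum_div, hpsum]
  have hlogb_half : Real.logb 2 (1/2 : ℝ) = -1 := by
    rw [one_div, Real.logb_inv, Real.logb_self_eq_one] <;> norm_num
  -- rewrite distMutInfo as a single sum over e
  have hEqual : distMutInfo (fun (a : Fin 2) (e : Fin K) => ((ρ a * E e).trace).re / 2) =
      ∑ e, (p 0 e / 2 * Real.logb 2 (p 0 e) + p 1 e / 2 * Real.logb 2 (p 1 e)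
        - (p 0 e + p 1 e)/2 * Real.logb 2 ((p 0 e + p 1 e)/2)) := by
    rw [distMutInfo]
    have hTA : (-∑ a : Fin 2, (∑ e, p a e / 2) * Real.logb 2 (∑ e, p a e / 2)) = 1 := by
      rw [Fin.sum_univ_two, hhalf 0, hhalf 1, hlogb_half]
      norm_num
    have hTB : (-∑ e, (∑ a : Fin 2, p a e / 2) * Real.logb 2 (∑ a : Fin 2, p a e / 2)) =
        -∑ e, ((p 0 e + p 1 e)/2 * Real.logb 2 ((p 0 e + p 1 e)/2)) := by
      congr 1
      apply Finset.sum_congr rfl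
      intro e _
      rw [Fin.sum_univ_two]
      ring_nf
    have hTC : (∑ a : Fin 2, ∑ e, (p a e / 2) * Real.logb 2 (p a e / 2)) =
        (∑ e, (p 0 e / 2 * Real.logb 2 (p 0 e) + p 1 e / 2 * Real.logb 2 (p 1 e))) - 1 := by
      have hinner : ∀ a : Fin 2, ∑ e, (p a e / 2) * Real.logb 2 (p a e / 2) =
          (∑ e, p a e / 2 * Real.logb 2 (p a e)) - 1/2 := by
        intro a
        rw [← hhalf a, ← Finset.sum_sub_distrib]
        apply Finset.sum_congr rfl
        intro e _
        exact half_logb (p a e)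
      rw [Fin.sum_univ_two, hinner 0, hinner 1,
        show (∑ e : Fin K, (p 0 e / 2 * Real.logb 2 (p 0 e) + p 1 e / 2 * Real.logb 2 (p 1 e))) =
          (∑ e : Fin K, p 0 e / 2 * Real.logb 2 (p 0 e)) +
          ∑ e : Fin K, p 1 e / 2 * Real.logb 2 (p 1 e) from Finset.sum_add_distrib]
      ring
    rw [hTA, hTC, hTB]
    rw [show (∑ e : Fin K,
      (p 0 e / 2 * Real.logb 2 (p 0 e) + p 1 e / 2 * Real.logb 2 (p 1 e) -
        (p 0 e + p 1 e) / 2 * Real.logb 2 ((p 0 e + p 1 e) / 2))) =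
      (∑ e : Fin K, (p 0 e / 2 * Real.logb 2 (p 0 e) + p 1 e / 2 * Real.logb 2 (p 1 e))) -
      (∑ e : Fin K, (p 0 e + p 1 e) / 2 * Real.logb 2 ((p 0 e + p 1 e) / 2)) from
      Finset.sum_sub_distrib _ _]
    ring
  rw [hEqual]
  have hΔherm : (ρ 0 - ρ 1).IsHermitian := ((hρ 0).1).sub ((hρ 1).1)
  have hbound := tracenorm_bound hΔherm E hE hEsum
  calc ∑ e, (p 0 e / 2 * Real.logb 2 (p 0 e) + p 1 e / 2 * Real.logb 2 (p 1 e)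
        - (p 0 e + p 1 e)/2 * Real.logb 2 ((p 0 e + p 1 e)/2))
      ≤ ∑ e, |(((ρ 0 - ρ 1) * E e).trace).re| / 2 := by
        apply Finset.sum_le_sum
        intro e _
        have hk := key_logb (hpnn 0 e) (hpnn 1 e)
        have hre : (((ρ 0 - ρ 1) * E e).trace).re = p 0 e - p 1 e := by
          rw [sub_mul, Matrix.trace_sub, Complex.sub_re]
        rw [hre]
        linarith
    _ = (1/2) * ∑ e, |(((ρ 0 - ρ 1) * E e).trace).re| := by
        rw [Finset.mul_sum]
        apply Finset.sum_congr rfl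
        intro e _; ring
    _ ≤ (1/2) * traceNorm (ρ 0 - ρ 1) := by linarith

end
end

section
/- Fix a 2n-bit error string c ∈ F_2^{2n}, and choose uniformly at random a subset of n of the 2n positions (the information positions), the complement being test positions. Let |C_I| and |C_T| be the number of 1-bits of c falling in the information positions and test positions respectively. Then for any ε > 0 and any real p_a, P[ (|C_I|/n > p_a + ε) ∧ (|C_T|/n ≤ p_a) ] ≤ exp(−n ε² / 2). -/
open Finset
open scoped Classical

section Stmt15Aux

variable {N : ℕ}

lemma stmt15_hoeffding_scalar {p t : ℝ} (hp0 : 0 ≤ p) (hp1 : p ≤ 1) (ht : 0 ≤ t) :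
    1 + p * (Real.exp t - 1) ≤ Real.exp (p * t + t ^ 2 / 8) := by
  have hv : ∀ u : ℝ, 0 < 1 - p + p * Real.exp u := by
    intro u
    rcases eq_or_lt_of_le hp0 with h | h
    · simp [← h]
    · nlinarith [Real.exp_pos u]
  have hvd : ∀ u : ℝ, HasDerivAt (fun u => 1 - p + p * Real.exp u) (p * Real.exp u) u := by
    intro u
    simpa using ((Real.hasDerivAt_exp u).const_mul p).const_add (1 - p)
  set ψ : ℝ → ℝ := fun u => p + u / 4 - p * Real.exp u / (1 - p + p * Real.exp u) with hψdef
  have hψd : ∀ u, HasDerivAt ψ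
      (1/4 - (p * Real.exp u * (1 - p)) / (1 - p + p * Real.exp u)^2) u := by
    intro u
    have hdiv := ((Real.hasDerivAt_exp u).const_mul p).div (hvd u) (hv u).ne'
    have h1 : HasDerivAt (fun u : ℝ => p + u / 4) (1/4) u := by
      simpa using (hasDerivAt_id u).div_const 4 |>.const_add p
    have h2 := h1.sub hdiv
    refine h2.congr_deriv ?_
    have h3 := (hv u).ne'
    field_simp
    ring
  have hψmono : Monotone ψ := by
    apply monotone_of_deriv_nonneg (fun u => (hψd u).differentiableAt)
    intro u
    rw [(hψd u).deriv]
    have h2 : 0 < 1 - p + p * Real.exp u := hv u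
    have h3 : 0 ≤ p * Real.exp u := by positivity
    rw [sub_nonneg, div_le_iff₀ (by positivity)]
    nlinarith [sq_nonneg (p * Real.exp u - (1 - p))]
  have hψ0 : ψ 0 = 0 := by simp [hψdef]
  set φ : ℝ → ℝ := fun u => p * u + u ^ 2 / 8 - Real.log (1 - p + p * Real.exp u) with hφdef
  have hφd : ∀ u, HasDerivAt φ (ψ u) u := by
    intro u
    have hlog := (hvd u).log (hv u).ne'
    have h1 : HasDerivAt (fun u : ℝ => p * u + u ^ 2 / 8) (p + u / 4) u := by
      have := ((hasDerivAt_pow 2 u).div_const 8).const_add (0 : ℝ)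
      have h2 := ((hasDerivAt_id u).const_mul p).add ((hasDerivAt_pow 2 u).div_const 8)
      refine h2.congr_deriv ?_
      ring
    exact h1.sub hlog
  have hφmono : MonotoneOn φ (Set.Ici (0:ℝ)) := by
    apply monotoneOn_of_deriv_nonneg (convex_Ici 0)
    · exact Continuous.continuousOn (by
        exact continuous_iff_continuousAt.2 fun u => (hφd u).differentiableAt.continuousAt)
    · intro u _
      exact (hφd u).differentiableAt.differentiableWithinAt
    · intro u hu
      rw [(hφd u).deriv]
      rw [interior_Ici] at hu
      have := hψmono (le_of_lt hu)
      rw [hψ0] at this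
      exact this
  have hφ0 : φ 0 = 0 := by simp [hφdef]
  have hφt : 0 ≤ φ t := by
    have := hφmono (Set.self_mem_Ici) (Set.mem_Ici.2 ht) ht
    rw [hφ0] at this
    exact this
  have hlog : Real.log (1 - p + p * Real.exp t) ≤ p * t + t ^ 2 / 8 := by
    simp only [hφdef] at hφt; linarith
  have := Real.exp_le_exp.2 hlog
  rw [Real.exp_log (hv t)] at this
  linarith [this]

lemma stmt15_swap_sum (s : ℕ) (f : Finset (Fin N) → Fin N → ℝ) :
    ∑ S ∈ powersetCard (s + 1) (univ : Finset (Fin N)), ∑ k ∈ S, f (S.erase k) k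
      = ∑ T ∈ powersetCard s (univ : Finset (Fin N)), ∑ k ∈ Tᶜ, f T k := by
  rw [Finset.sum_sigma', Finset.sum_sigma']
  refine Finset.sum_nbij' (fun p => ⟨p.1.erase p.2, p.2⟩)
    (fun q => ⟨insert q.2 q.1, q.2⟩) ?_ ?_ ?_ ?_ ?_
  · rintro ⟨S, k⟩ hp
    rw [Finset.mem_sigma] at hp
    obtain ⟨hS, hk⟩ := hp
    rw [Finset.mem_powersetCard_univ] at hS
    rw [Finset.mem_sigma]
    refine ⟨?_, by simp⟩
    rw [Finset.mem_powersetCard_univ, Finset.card_erase_of_mem hk, hS]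
    omega
  · rintro ⟨T, k⟩ hq
    rw [Finset.mem_sigma] at hq
    obtain ⟨hT, hk⟩ := hq
    rw [Finset.mem_powersetCard_univ] at hT
    rw [Finset.mem_compl] at hk
    rw [Finset.mem_sigma]
    refine ⟨?_, by simp⟩
    rw [Finset.mem_powersetCard_univ, Finset.card_insert_of_notMem hk, hT]
  · rintro ⟨S, k⟩ hp
    rw [Finset.mem_sigma] at hp
    exact congrArg (fun t => (⟨t, k⟩ : (_ : Finset (Fin N)) × Fin N))
      (Finset.insert_erase hp.2)
  · rintro ⟨T, k⟩ hq
    rw [Finset.mem_sigma] at hq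
    have hk : k ∉ T := Finset.mem_compl.1 hq.2
    exact congrArg (fun t => (⟨t, k⟩ : (_ : Finset (Fin N)) × Fin N))
      (Finset.erase_insert hk)
  · rintro ⟨S, k⟩ _
    rfl

lemma stmt15_sum_w (a : Fin N → ℕ) (s : ℕ) :
    (N : ℝ) * ∑ T ∈ powersetCard s (univ : Finset (Fin N)), (∑ k ∈ T, (a k : ℝ))
      = (∑ k, (a k : ℝ)) * s * (N.choose s) := by
  induction s with
  | zero => simp
  | succ s ih =>
    rcases lt_or_ge s N with hsN | hsN
    · have hswap := stmt15_swap_sum s (fun _ k => (a k : ℝ))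
      have hcompl : ∀ T : Finset (Fin N), ∑ k ∈ Tᶜ, (a k : ℝ)
          = (∑ k, (a k : ℝ)) - ∑ k ∈ T, (a k : ℝ) := by
        intro T
        have := Finset.sum_add_sum_compl T (fun k => (a k : ℝ))
        linarith
      rw [Finset.sum_congr rfl (fun T _ => hcompl T), Finset.sum_sub_distrib,
        Finset.sum_const, Finset.card_powersetCard, Finset.card_univ,
        Fintype.card_fin, nsmul_eq_mul] at hswap
      have hchoose : ((s : ℝ) + 1) * (N.choose (s + 1)) = ((N : ℝ) - s) * (N.choose s) := by
        have h := Nat.choose_succ_right_eq N s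
        have hcast : (N.choose (s + 1) : ℝ) * ((s : ℝ) + 1)
            = (N.choose s : ℝ) * ((N - s : ℕ) : ℝ) := by exact_mod_cast h
        rw [Nat.cast_sub hsN.le] at hcast
        linarith
      have h5 : (N : ℝ) * ∑ S ∈ powersetCard (s + 1) (univ : Finset (Fin N)), (∑ k ∈ S, (a k : ℝ))
          = (N : ℝ) * ((N.choose s : ℝ) * ∑ k, (a k : ℝ))
            - (N : ℝ) * ∑ T ∈ powersetCard s (univ : Finset (Fin N)), (∑ k ∈ T, (a k : ℝ)) := by
        rw [hswap]; ring
      rw [ih] at h5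
      rw [h5]
      push_cast
      linear_combination -(∑ k, (a k : ℝ)) * hchoose
    · have hempty : powersetCard (s + 1) (univ : Finset (Fin N)) = ∅ := by
        rw [Finset.powersetCard_eq_empty, Finset.card_univ, Fintype.card_fin]
        omega
      rw [hempty]
      have h0 : N.choose (s + 1) = 0 := Nat.choose_eq_zero_of_lt (by omega)
      simp [h0]

lemma stmt15_F_bound (a : Fin N → ℕ) (ha : ∀ k, a k ≤ 1) {x : ℝ} (hx : 1 ≤ x) (hN : 0 < N)
    (s : ℕ) :
    ∑ S ∈ powersetCard s (univ : Finset (Fin N)), x ^ (∑ k ∈ S, a k)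
      ≤ (N.choose s : ℝ) * (1 + (x - 1) * ((∑ k, (a k : ℝ)) / N)) ^ s := by
  set m : ℝ := ∑ k, (a k : ℝ) with hm
  have hNR : (0 : ℝ) < N := by exact_mod_cast hN
  have hm0 : 0 ≤ m := by positivity
  have hmN : m ≤ N := by
    rw [hm]
    calc ∑ k, (a k : ℝ) ≤ ∑ _k : Fin N, (1 : ℝ) := by
          apply Finset.sum_le_sum
          intro k _
          exact_mod_cast ha k
      _ = N := by simp
  set g : ℝ := 1 + (x - 1) * (m / N) with hg
  have hg1 : 1 ≤ g := by
    rw [hg]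
    have : 0 ≤ (x - 1) * (m / N) := by
      apply mul_nonneg (by linarith) (by positivity)
    linarith
  have hg0 : 0 ≤ g := by linarith
  induction s with
  | zero => simp [Finset.powersetCard_zero]
  | succ s ih =>
    rcases lt_or_ge s N with hsN | hsN
    · -- main case
      have hxpos : 0 < x := by linarith
      -- step 1 : (s+1) * F(s+1) = ∑_T x^(wT) * (∑_{k ∈ Tᶜ} x^(a k))
      have e1 : ((s : ℝ) + 1) * ∑ S ∈ powersetCard (s + 1) (univ : Finset (Fin N)),
            x ^ (∑ k ∈ S, a k)
          = ∑ T ∈ powersetCard s (univ : Finset (Fin N)),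
              x ^ (∑ k ∈ T, a k) * (∑ k ∈ Tᶜ, x ^ (a k)) := by
        calc ((s : ℝ) + 1) * ∑ S ∈ powersetCard (s + 1) (univ : Finset (Fin N)),
              x ^ (∑ k ∈ S, a k)
            = ∑ S ∈ powersetCard (s + 1) (univ : Finset (Fin N)),
                ∑ k ∈ S, x ^ (∑ j ∈ S.erase k, a j) * x ^ (a k) := by
              rw [Finset.mul_sum]
              apply Finset.sum_congr rfl
              intro S hS
              rw [Finset.mem_powersetCard_univ] at hS
              have hterm : ∀ k ∈ S, x ^ (∑ j ∈ S.erase k, a j) * x ^ (a k)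
                  = x ^ (∑ j ∈ S, a j) := by
                intro k hk
                rw [← pow_add, Finset.sum_erase_add _ _ hk]
              rw [Finset.sum_congr rfl hterm, Finset.sum_const, hS, nsmul_eq_mul]
              push_cast
              ring
          _ = ∑ T ∈ powersetCard s (univ : Finset (Fin N)),
                ∑ k ∈ Tᶜ, x ^ (∑ j ∈ T, a j) * x ^ (a k) :=
              stmt15_swap_sum s (fun T k => x ^ (∑ j ∈ T, a j) * x ^ (a k))
          _ = ∑ T ∈ powersetCard s (univ : Finset (Fin N)),
                x ^ (∑ k ∈ T, a k) * (∑ k ∈ Tᶜ, x ^ (a k)) := by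
              apply Finset.sum_congr rfl
              intro T _
              rw [Finset.mul_sum]
      -- the inner factor
      have e2 : ∀ T : Finset (Fin N), T ∈ powersetCard s (univ : Finset (Fin N)) →
          (∑ k ∈ Tᶜ, x ^ (a k))
            = ((N : ℝ) - s) + (x - 1) * (m - ∑ k ∈ T, (a k : ℝ)) := by
        intro T hT
        rw [Finset.mem_powersetCard_univ] at hT
        have hterm : ∀ k : Fin N, x ^ (a k) = 1 + (x - 1) * (a k : ℝ) := by
          intro k
          rcases Nat.le_one_iff_eq_zero_or_eq_one.mp (ha k) with h | h <;> rw [h] <;> simp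
        calc (∑ k ∈ Tᶜ, x ^ (a k)) = ∑ k ∈ Tᶜ, (1 + (x - 1) * (a k : ℝ)) := by
              exact Finset.sum_congr rfl fun k _ => hterm k
          _ = (Tᶜ.card : ℝ) + (x - 1) * ∑ k ∈ Tᶜ, (a k : ℝ) := by
              rw [Finset.sum_add_distrib, Finset.sum_const, nsmul_eq_mul, mul_one,
                Finset.mul_sum]
          _ = ((N : ℝ) - s) + (x - 1) * (m - ∑ k ∈ T, (a k : ℝ)) := by
              have h1 : Tᶜ.card = N - s := by
                rw [Finset.card_compl, hT, Fintype.card_fin]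
              have h2 : ∑ k ∈ Tᶜ, (a k : ℝ) = m - ∑ k ∈ T, (a k : ℝ) := by
                have := Finset.sum_add_sum_compl T (fun k => (a k : ℝ))
                rw [hm]; linarith
              rw [h1, h2, Nat.cast_sub hsN.le]
      -- Chebyshev
      have cheb : ((N.choose s : ℝ)) * ∑ T ∈ powersetCard s (univ : Finset (Fin N)),
            x ^ (∑ k ∈ T, a k) * (((N : ℝ) - s) + (x - 1) * (m - ∑ k ∈ T, (a k : ℝ)))
          ≤ (∑ T ∈ powersetCard s (univ : Finset (Fin N)), x ^ (∑ k ∈ T, a k))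
            * (∑ T ∈ powersetCard s (univ : Finset (Fin N)),
                (((N : ℝ) - s) + (x - 1) * (m - ∑ k ∈ T, (a k : ℝ)))) := by
        have hcard : (powersetCard s (univ : Finset (Fin N))).card = N.choose s := by
          rw [Finset.card_powersetCard, Finset.card_univ, Fintype.card_fin]
        have hanti : AntivaryOn (fun T : Finset (Fin N) => x ^ (∑ k ∈ T, a k))
            (fun T : Finset (Fin N) => ((N : ℝ) - s) + (x - 1) * (m - ∑ k ∈ T, (a k : ℝ)))
            ↑(powersetCard s (univ : Finset (Fin N))) := by
          intro T _ T' _ hlt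
          simp only at hlt ⊢
          have hw : (∑ k ∈ T', (a k : ℝ)) < ∑ k ∈ T, (a k : ℝ) := by
            by_contra hcon
            push_neg at hcon
            have : (x - 1) * (m - ∑ k ∈ T', (a k : ℝ)) ≤ (x - 1) * (m - ∑ k ∈ T, (a k : ℝ)) := by
              apply mul_le_mul_of_nonneg_left (by linarith) (by linarith)
            linarith
          have hwn : (∑ k ∈ T', a k) ≤ (∑ k ∈ T, a k) := by
            have : ((∑ k ∈ T', a k : ℕ) : ℝ) < ((∑ k ∈ T, a k : ℕ) : ℝ) := by
              push_cast
              exact hw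
            exact_mod_cast this.le
          exact pow_le_pow_right₀ hx hwn
        have := hanti.card_mul_sum_le_sum_mul_sum
        rwa [hcard] at this
      -- sum of g-values
      have e3 : ∑ T ∈ powersetCard s (univ : Finset (Fin N)),
            (((N : ℝ) - s) + (x - 1) * (m - ∑ k ∈ T, (a k : ℝ)))
          = (N.choose s : ℝ) * ((N : ℝ) - s) * g := by
        have hW := stmt15_sum_w a s
        have hcard : (powersetCard s (univ : Finset (Fin N))).card = N.choose s := by
          rw [Finset.card_powersetCard, Finset.card_univ, Fintype.card_fin]
        rw [Finset.sum_add_distrib, Finset.sum_const, hcard, nsmul_eq_mul, ← Finset.mul_sum,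
          Finset.sum_sub_distrib, Finset.sum_const, hcard, nsmul_eq_mul]
        -- now : C*(N-s) + (x-1)*(C*m - W) = C*(N-s)*g  where N*W = m*s*C
        have hNne : (N : ℝ) ≠ 0 := ne_of_gt hNR
        rw [hg]
        field_simp
        nlinarith [hW]
      -- combine
      have key : ((N.choose s : ℝ)) * (((s : ℝ) + 1) * ∑ S ∈ powersetCard (s + 1)
            (univ : Finset (Fin N)), x ^ (∑ k ∈ S, a k))
          ≤ ((N.choose s : ℝ) * g ^ s) * ((N.choose s : ℝ) * ((N : ℝ) - s) * g) := by
        rw [e1]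
        calc ((N.choose s : ℝ)) * ∑ T ∈ powersetCard s (univ : Finset (Fin N)),
              x ^ (∑ k ∈ T, a k) * (∑ k ∈ Tᶜ, x ^ (a k))
            = ((N.choose s : ℝ)) * ∑ T ∈ powersetCard s (univ : Finset (Fin N)),
              x ^ (∑ k ∈ T, a k) * (((N : ℝ) - s) + (x - 1) * (m - ∑ k ∈ T, (a k : ℝ))) := by
              congr 1
              exact Finset.sum_congr rfl fun T hT => by rw [e2 T hT]
          _ ≤ (∑ T ∈ powersetCard s (univ : Finset (Fin N)), x ^ (∑ k ∈ T, a k))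
              * ((N.choose s : ℝ) * ((N : ℝ) - s) * g) := by rw [← e3]; exact cheb
          _ ≤ ((N.choose s : ℝ) * g ^ s) * ((N.choose s : ℝ) * ((N : ℝ) - s) * g) := by
              apply mul_le_mul_of_nonneg_right ih
              have : (0:ℝ) ≤ (N : ℝ) - s := by
                have : (s : ℝ) < N := by exact_mod_cast hsN
                linarith
              positivity
      have hCpos : (0 : ℝ) < (N.choose s : ℝ) := by
        exact_mod_cast Nat.choose_pos hsN.le
      have key2 : ((s : ℝ) + 1) * ∑ S ∈ powersetCard (s + 1) (univ : Finset (Fin N)),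
            x ^ (∑ k ∈ S, a k)
          ≤ (g ^ s) * ((N.choose s : ℝ) * ((N : ℝ) - s) * g) := by
        apply le_of_mul_le_mul_left ?_ hCpos
        calc (N.choose s : ℝ) * (((s : ℝ) + 1) * ∑ S ∈ powersetCard (s + 1)
              (univ : Finset (Fin N)), x ^ (∑ k ∈ S, a k))
              ≤ ((N.choose s : ℝ) * g ^ s) * ((N.choose s : ℝ) * ((N : ℝ) - s) * g) := key
          _ = (N.choose s : ℝ) * ((g ^ s) * ((N.choose s : ℝ) * ((N : ℝ) - s) * g)) := by ring
      have hchoose : ((s : ℝ) + 1) * (N.choose (s + 1) : ℝ) = ((N : ℝ) - s) * (N.choose s : ℝ) := by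
        have h := Nat.choose_succ_right_eq N s
        have hcast : (N.choose (s + 1) : ℝ) * ((s : ℝ) + 1)
            = (N.choose s : ℝ) * ((N - s : ℕ) : ℝ) := by exact_mod_cast h
        rw [Nat.cast_sub hsN.le] at hcast
        linarith
      have hs1 : (0:ℝ) < (s : ℝ) + 1 := by positivity
      rw [← mul_le_mul_iff_right₀ hs1]
      calc ((s : ℝ) + 1) * ∑ S ∈ powersetCard (s + 1) (univ : Finset (Fin N)),
            x ^ (∑ k ∈ S, a k)
          ≤ (g ^ s) * ((N.choose s : ℝ) * ((N : ℝ) - s) * g) := key2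
        _ = (((s : ℝ) + 1) * (N.choose (s + 1) : ℝ)) * g ^ (s + 1) := by
            linear_combination (-(g ^ (s + 1))) * hchoose
        _ = ((s : ℝ) + 1) * ((N.choose (s + 1) : ℝ) * (1 + (x - 1) * (m / N)) ^ (s + 1)) := by
            rw [hg]
            ring
    · have hempty : powersetCard (s + 1) (univ : Finset (Fin N)) = ∅ := by
        rw [Finset.powersetCard_eq_empty, Finset.card_univ, Fintype.card_fin]
        omega
      have h0 : N.choose (s + 1) = 0 := Nat.choose_eq_zero_of_lt (by omega)
      rw [hempty, h0]
      simp

end Stmt15Aux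

/-- Random sampling bound: fix a `2n`-bit error string `c` and pick a uniformly
random `n`-element subset `S` of the positions (the information positions).
With `|C_I| = ∑_{k∈S} c_k` and `|C_T| = ∑_{k∉S} c_k`, for any `ε > 0`,
`P[ |C_I|/n > p_a + ε ∧ |C_T|/n ≤ p_a ] ≤ exp (−n ε² / 2)`. -/
theorem stmt_15 (n : ℕ) (c : Fin (2 * n) → ZMod 2) (p_a ε : ℝ) (hε : 0 < ε) :
    ((Finset.univ.filter (fun S : Finset (Fin (2 * n)) => S.card = n ∧
        (p_a + ε < (∑ k ∈ S, ((c k).val : ℝ)) / n ∧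
         (∑ k ∈ Sᶜ, ((c k).val : ℝ)) / n ≤ p_a))).card : ℝ) /
      ((Finset.univ.filter (fun S : Finset (Fin (2 * n)) => S.card = n)).card : ℝ)
      ≤ Real.exp (-(n : ℝ) * ε ^ 2 / 2) := by
  rcases Nat.eq_zero_or_pos n with hn | hn
  · subst hn
    have hempty : (Finset.univ.filter (fun S : Finset (Fin (2 * 0)) => S.card = 0 ∧
        (p_a + ε < (∑ k ∈ S, ((c k).val : ℝ)) / (0:ℕ) ∧
         (∑ k ∈ Sᶜ, ((c k).val : ℝ)) / (0:ℕ) ≤ p_a))) = ∅ := by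
      apply Finset.filter_eq_empty_iff.2
      rintro S -
      rintro ⟨-, h1, h2⟩
      rw [Nat.cast_zero, div_zero] at h1 h2
      linarith
    rw [hempty]
    simp only [Finset.card_empty, Nat.cast_zero, zero_div]
    exact (Real.exp_pos _).le
  · set a : Fin (2 * n) → ℕ := fun k => (c k).val with ha_def
    have ha : ∀ k, a k ≤ 1 := by
      intro k
      have h := ZMod.val_lt (c k)
      simp only [ha_def]
      omega
    have hN : 0 < 2 * n := by omega
    have hnR : (0 : ℝ) < n := by exact_mod_cast hn
    set m : ℝ := ∑ k, (a k : ℝ) with hm_def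
    have hm0 : 0 ≤ m := by positivity
    have hmN : m ≤ (2 * n : ℕ) := by
      rw [hm_def]
      calc ∑ k, (a k : ℝ) ≤ ∑ _k : Fin (2 * n), (1 : ℝ) :=
            Finset.sum_le_sum fun k _ => by exact_mod_cast ha k
        _ = ((2 * n : ℕ) : ℝ) := by simp
    set x : ℝ := Real.exp (2 * ε) with hx_def
    have hx : 1 ≤ x := Real.one_le_exp (by linarith)
    set E := Finset.univ.filter (fun S : Finset (Fin (2 * n)) => S.card = n ∧
        (p_a + ε < (∑ k ∈ S, ((c k).val : ℝ)) / n ∧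
         (∑ k ∈ Sᶜ, ((c k).val : ℝ)) / n ≤ p_a)) with hE_def
    set D := Finset.univ.filter (fun S : Finset (Fin (2 * n)) => S.card = n) with hD_def
    have hDcard : D.card = (2 * n).choose n := by
      have : D = powersetCard n (univ : Finset (Fin (2 * n))) := by
        ext S
        simp [hD_def, Finset.mem_powersetCard_univ]
      rw [this, Finset.card_powersetCard, Finset.card_univ, Fintype.card_fin]
    have hCpos : (0 : ℝ) < ((2 * n).choose n : ℝ) := by
      exact_mod_cast Nat.choose_pos (by omega)
    -- each event set has large weight
    have key1 : ∀ S ∈ E, Real.exp (ε * m + n * ε ^ 2) ≤ x ^ (∑ k ∈ S, a k) := by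
      intro S hS
      rw [hE_def, Finset.mem_filter] at hS
      obtain ⟨-, hcard, h1, h2⟩ := hS
      set wS : ℝ := ∑ k ∈ S, ((c k).val : ℝ) with hwS
      set wT : ℝ := ∑ k ∈ Sᶜ, ((c k).val : ℝ) with hwT
      have hsum : wS + wT = m := by
        rw [hwS, hwT, hm_def]
        exact Finset.sum_add_sum_compl S _
      have h1' : (p_a + ε) * n < wS := by
        rw [← lt_div_iff₀ hnR] at *
        exact h1
      have h2' : wT ≤ p_a * n := by
        rw [← div_le_iff₀ hnR] at *
        exact h2
      have hwS2 : m + n * ε ≤ 2 * wS := by nlinarith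
      have hcast : ((∑ k ∈ S, a k : ℕ) : ℝ) = wS := by
        rw [hwS, ha_def]
        push_cast
        rfl
      rw [hx_def, ← Real.exp_nat_mul]
      apply Real.exp_le_exp.2
      rw [hcast]
      nlinarith
    -- sum over event vs full sum
    have key2 : (E.card : ℝ) * Real.exp (ε * m + n * ε ^ 2)
        ≤ ∑ S ∈ powersetCard n (univ : Finset (Fin (2 * n))), x ^ (∑ k ∈ S, a k) := by
      have hsub : E ⊆ powersetCard n (univ : Finset (Fin (2 * n))) := by
        intro S hS
        rw [hE_def, Finset.mem_filter] at hS
        rw [Finset.mem_powersetCard_univ]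
        exact hS.2.1
      calc (E.card : ℝ) * Real.exp (ε * m + n * ε ^ 2)
          = ∑ _S ∈ E, Real.exp (ε * m + n * ε ^ 2) := by
            rw [Finset.sum_const, nsmul_eq_mul]
        _ ≤ ∑ S ∈ E, x ^ (∑ k ∈ S, a k) := Finset.sum_le_sum key1
        _ ≤ ∑ S ∈ powersetCard n (univ : Finset (Fin (2 * n))), x ^ (∑ k ∈ S, a k) := by
            apply Finset.sum_le_sum_of_subset_of_nonneg hsub
            intro S _ _
            positivity
    have key3 := stmt15_F_bound a ha hx hN n
    set g : ℝ := 1 + (x - 1) * (m / (2 * n : ℕ)) with hg_def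
    have hp1 : m / ((2 * n : ℕ) : ℝ) ≤ 1 := by
      rw [div_le_one (by exact_mod_cast hN)]
      exact hmN
    have hp0 : 0 ≤ m / ((2 * n : ℕ) : ℝ) := by positivity
    have key4 : g ≤ Real.exp (2 * ε * (m / ((2 * n : ℕ) : ℝ)) + ε ^ 2 / 2) := by
      have := stmt15_hoeffding_scalar hp0 hp1 (t := 2 * ε) (by linarith)
      rw [hg_def, hx_def]
      calc 1 + (Real.exp (2 * ε) - 1) * (m / ((2 * n : ℕ) : ℝ))
          = 1 + (m / ((2 * n : ℕ) : ℝ)) * (Real.exp (2 * ε) - 1) := by ring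
        _ ≤ Real.exp ((m / ((2 * n : ℕ) : ℝ)) * (2 * ε) + (2 * ε) ^ 2 / 8) := this
        _ = Real.exp (2 * ε * (m / ((2 * n : ℕ) : ℝ)) + ε ^ 2 / 2) := by
            congr 1
            ring
    have hg0 : 0 ≤ g := by
      rw [hg_def]
      have : 0 ≤ (x - 1) * (m / ((2 * n : ℕ) : ℝ)) := mul_nonneg (by linarith) hp0
      linarith
    have key5 : g ^ n ≤ Real.exp (ε * m + n * ε ^ 2 / 2) := by
      calc g ^ n ≤ (Real.exp (2 * ε * (m / ((2 * n : ℕ) : ℝ)) + ε ^ 2 / 2)) ^ n :=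
            pow_le_pow_left₀ hg0 key4 n
        _ = Real.exp ((n : ℝ) * (2 * ε * (m / ((2 * n : ℕ) : ℝ)) + ε ^ 2 / 2)) := by
            rw [← Real.exp_nat_mul]
        _ = Real.exp (ε * m + n * ε ^ 2 / 2) := by
            congr 1
            have h2n : ((2 * n : ℕ) : ℝ) = 2 * (n : ℝ) := by push_cast; ring
            rw [h2n]
            field_simp
    -- put together
    have final : (E.card : ℝ) * Real.exp (ε * m + n * ε ^ 2)
        ≤ (((2 * n).choose n : ℝ) * Real.exp (-(n : ℝ) * ε ^ 2 / 2))
            * Real.exp (ε * m + n * ε ^ 2) := by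
      calc (E.card : ℝ) * Real.exp (ε * m + n * ε ^ 2)
          ≤ ((2 * n).choose n : ℝ) * g ^ n := key2.trans key3
        _ ≤ ((2 * n).choose n : ℝ) * Real.exp (ε * m + n * ε ^ 2 / 2) :=
            mul_le_mul_of_nonneg_left key5 hCpos.le
        _ = (((2 * n).choose n : ℝ) * Real.exp (-(n : ℝ) * ε ^ 2 / 2))
              * Real.exp (ε * m + n * ε ^ 2) := by
            rw [mul_assoc, ← Real.exp_add]
            congr 2
            ring
    have hE_le : (E.card : ℝ) ≤ ((2 * n).choose n : ℝ) * Real.exp (-(n : ℝ) * ε ^ 2 / 2) :=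
      le_of_mul_le_mul_right final (Real.exp_pos _)
    rw [hDcard]
    rw [div_le_iff₀ hCpos]
    calc (E.card : ℝ) ≤ ((2 * n).choose n : ℝ) * Real.exp (-(n : ℝ) * ε ^ 2 / 2) := hE_le
      _ = Real.exp (-(n : ℝ) * ε ^ 2 / 2) * ((2 * n).choose n : ℝ) := by ring
end
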